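/- arXiv:1101.1923 — 7 statements merged into one kernel-verified Lean document; each statement's English description precedes it below -/
import Mathlib

section
/- For any complex n×n matrix A and any positive integer d, A^d = (1/(d+1)) · Σ_{j=0}^{d} e^{πijd/(d+1)} · (e^{-πij/(d+1)} A + e^{πij/(d+1)} A*)^d, expressing A^d as a linear combination of d-th powers of Hermitian matrices. -/
/-!
For a primitive `(d+1)`-th root of unity `ζ`, the polynomial `(A + X B)^d` (with coefficients in
a possibly noncommutative algebra) has degree at most `d`, so averaging its values at
`1, ζ, …, ζ^d` kills every coefficient except the constant one, `A^d`. With `B = Aᴴ`, pulling the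
factor `w = e^{πij/(d+1)}` (whose square is `ζ^j`) into the `j`-th term gives the stated identity.
-/

open Complex Finset Matrix

namespace Polynomial

theorem eval_algebraMap_C_mul_X_add_C_pow {K S : Type*} [CommSemiring K] [Semiring S]
    [Algebra K S] (A B : S) (z : K) (d : ℕ) :
    ((C B * X + C A) ^ d).eval (algebraMap K S z) = (A + z • B) ^ d := by
  have hcomm (a : S) : Commute (RingHom.id S a) (algebraMap K S z) :=
    (Algebra.commutes z a).symm
  change eval₂RingHom' (RingHom.id S) _ hcomm _ = _
  rw [map_pow]
  simp [Algebra.smul_def, add_comm, Algebra.commutes]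

end Polynomial

namespace IsPrimitiveRoot

open Polynomial

variable {K S : Type*} [CommRing K] [IsDomain K] [Ring S] [Algebra K S] {ζ : K} {k : ℕ}

theorem sum_range_pow_pow_of_lt (hζ : IsPrimitiveRoot ζ k) {m : ℕ} (hm : m < k) :
    ∑ j ∈ range k, (ζ ^ j) ^ m = if m = 0 then (k : K) else 0 := by
  split_ifs with h0
  · simp [h0]
  · have hne : ζ ^ m - 1 ≠ 0 := sub_ne_zero.2 (hζ.pow_ne_one_of_pos_of_lt h0 hm)
    have hgeom := geom_sum_mul (ζ ^ m) k
    rw [pow_right_comm, hζ.pow_eq_one, one_pow, sub_self] at hgeom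
    simp_rw [pow_right_comm _ _ m]
    exact (mul_eq_zero.1 hgeom).resolve_right hne

theorem sum_eval_algebraMap_pow (hζ : IsPrimitiveRoot ζ k) {p : S[X]} (hp : p.natDegree < k) :
    ∑ j ∈ range k, p.eval (algebraMap K S (ζ ^ j)) = k • p.coeff 0 := by
  simp_rw [eval_eq_sum_range' hp, ← map_pow]
  rw [sum_comm, sum_eq_single_of_mem 0 (mem_range.2 (pos_of_gt hp))]
  · rw [← mul_sum, ← map_sum, hζ.sum_range_pow_pow_of_lt (pos_of_gt hp), if_pos rfl,
      map_natCast, ← nsmul_eq_mul']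
  · intro m hm h0
    rw [← mul_sum, ← map_sum, hζ.sum_range_pow_pow_of_lt (mem_range.1 hm), if_neg h0,
      map_zero, mul_zero]

theorem sum_add_smul_pow {d : ℕ} (hζ : IsPrimitiveRoot ζ (d + 1)) (A B : S) :
    ∑ j ∈ range (d + 1), (A + ζ ^ j • B) ^ d = (d + 1) • A ^ d := by
  have hdeg : ((C B * X + C A) ^ d).natDegree < d + 1 :=
    Nat.lt_succ_of_le <|
      natDegree_pow_le.trans (Nat.mul_le_mul_left d natDegree_linear_le) |>.trans_eq (mul_one d)
  have hsum := hζ.sum_eval_algebraMap_pow hdeg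
  rw [coeff_zero_eq_eval_zero, ← map_zero (algebraMap K S),
    eval_algebraMap_C_mul_X_add_C_pow, zero_smul, add_zero] at hsum
  simpa only [eval_algebraMap_C_mul_X_add_C_pow] using hsum

end IsPrimitiveRoot

theorem pow_smul_inv_smul_add_smul_pow {K S : Type*} [Field K] [Semiring S] [Algebra K S]
    {w : K} (hw : w ≠ 0) (A B : S) (d : ℕ) :
    w ^ d • (w⁻¹ • A + w • B) ^ d = (A + w ^ 2 • B) ^ d := by
  rw [← smul_pow, smul_add, smul_smul, smul_smul, mul_inv_cancel₀ hw, one_smul, sq]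

theorem polarization_hermitian_general (n d : ℕ)
    (A : Matrix (Fin n) (Fin n) ℂ) :
    A ^ d = ((d + 1 : ℂ))⁻¹ •
      ∑ j ∈ Finset.range (d + 1),
        Complex.exp (Real.pi * Complex.I * j * d / (d + 1)) •
          (Complex.exp (-(Real.pi * Complex.I * j / (d + 1))) • A +
           Complex.exp (Real.pi * Complex.I * j / (d + 1)) • Aᴴ) ^ d := by
  set ζ : ℂ := exp (2 * Real.pi * I / (d + 1))
  have hζ : IsPrimitiveRoot ζ (d + 1) := by
    simpa using Complex.isPrimitiveRoot_exp (d + 1) d.succ_ne_zero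
  have hterm (j : ℕ) : exp (Real.pi * I * j * d / (d + 1)) •
      (exp (-(Real.pi * I * j / (d + 1))) • A + exp (Real.pi * I * j / (d + 1)) • Aᴴ) ^ d =
      (A + ζ ^ j • Aᴴ) ^ d := by
    set w := exp (Real.pi * I * j / (d + 1))
    have hpow : exp (Real.pi * I * j * d / (d + 1)) = w ^ d := by
      rw [← exp_nat_mul]; ring_nf
    have hsq : w ^ 2 = ζ ^ j := by
      rw [← exp_nat_mul, ← exp_nat_mul]; ring_nf
    rw [hpow, exp_neg, pow_smul_inv_smul_add_smul_pow (exp_ne_zero _), hsq]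
  simp_rw [hterm]
  rw [hζ.sum_add_smul_pow, ← Nat.cast_smul_eq_nsmul ℂ, Nat.cast_add_one,
    inv_smul_smul₀ (Nat.cast_add_one_ne_zero d)]

theorem polarization_hermitian (n d : ℕ) (hd : 1 ≤ d)
    (A : Matrix (Fin n) (Fin n) ℂ) :
    A ^ d = ((d + 1 : ℂ))⁻¹ •
      ∑ j ∈ Finset.range (d + 1),
        Complex.exp (Real.pi * Complex.I * j * d / (d + 1)) •
          (Complex.exp (-(Real.pi * Complex.I * j / (d + 1))) • A +
           Complex.exp (Real.pi * Complex.I * j / (d + 1)) • Aᴴ) ^ d :=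
  polarization_hermitian_general n d A
end

section
/- Let V be a finite-dimensional normed space, K ⊆ V an open convex set, and F : K → ℝ a convex L-Lipschitz function. Then the function F̃ : V → ℝ defined by F̃(x) = sup { F(y) + φ(x−y) : y ∈ K, φ ∈ ∂F(y) } is a convex L-Lipschitz extension of F which is pointwise minimal among all convex extensions of F. -/
/-!
A subgradient `φ ∈ ∂F(y)` of an `L`-Lipschitz function at an interior point satisfies
`‖φ‖ ≤ L`, and `∂F(y)` is nonempty at every point of the open set `K` by separating `(y, F y)`
from the open convex strict epigraph of `F`. So `minConvExt K F` is the supremum of a nonempty,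
pointwise bounded family of affine `L`-Lipschitz functions, hence convex and `L`-Lipschitz; on `K`
it equals `F`, since every member lies below `F` and the one based at `x` touches it at `x`.
If `G` is convex and agrees with `F` on `K`, then `φ ∈ ∂F(y)` is a subgradient of `G` near `y`,
hence everywhere, because the local minimum `y` of the convex function `G - φ` is global.
-/

open Set

/-- The pointwise minimal convex extension of a convex Lipschitz function `F` defined
on a convex set `K`, given by the supremum of affine minorants coming from
subdifferentials at points of `K`. -/
noncomputable def minConvExt {V : Type*} [NormedAddCommGroup V] [NormedSpace ℝ V]
    (K : Set V) (F : V → ℝ) (x : V) : ℝ :=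
  sSup {r : ℝ | ∃ y ∈ K, ∃ φ : V →L[ℝ] ℝ,
    (∀ z ∈ K, F y + φ (z - y) ≤ F z) ∧ r = F y + φ (x - y)}

open Filter Topology

theorem ConvexOn.ciSup {E ι : Type*} [AddCommMonoid E] [Module ℝ E] [Nonempty ι] {s : Set E}
    {f : ι → E → ℝ} (hf : ∀ i, ConvexOn ℝ s (f i))
    (hbdd : ∀ x ∈ s, BddAbove (range fun i => f i x)) :
    ConvexOn ℝ s fun x => ⨆ i, f i x := by
  refine ⟨(hf (Classical.arbitrary ι)).1, fun x hx x' hx' a b ha hb hab => ciSup_le fun i => ?_⟩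
  calc f i (a • x + b • x') ≤ a • f i x + b • f i x' := (hf i).2 hx hx' ha hb hab
    _ ≤ a • (⨆ i, f i x) + b • (⨆ i, f i x') := by
      gcongr
      · exact le_ciSup (hbdd x hx) i
      · exact le_ciSup (hbdd x' hx') i

theorem LipschitzWith.ciSup {α ι : Type*} [PseudoMetricSpace α] [Nonempty ι] {L : NNReal}
    {f : ι → α → ℝ} (hf : ∀ i, LipschitzWith L (f i))
    (hbdd : ∀ x, BddAbove (range fun i => f i x)) :
    LipschitzWith L fun x => ⨆ i, f i x :=
  LipschitzWith.of_le_add_mul L fun x x' => ciSup_le fun i =>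
    calc f i x ≤ f i x' + L * dist x x' := (hf i).le_add_mul x x'
      _ ≤ (⨆ i, f i x') + L * dist x x' := by gcongr; exact le_ciSup (hbdd x') i

section Subdifferential

variable {V : Type*} [NormedAddCommGroup V] [NormedSpace ℝ V]

def subdifferential (K : Set V) (F : V → ℝ) (y : V) : Set (V →L[ℝ] ℝ) :=
  {φ | ∀ z ∈ K, F y + φ (z - y) ≤ F z}

theorem norm_le_of_mem_subdifferential {K : Set V} {F : V → ℝ} {L : NNReal} {y : V}
    {φ : V →L[ℝ] ℝ} (hK : K ∈ 𝓝 y) (hF : LipschitzOnWith L F K)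
    (hφ : φ ∈ subdifferential K F y) : ‖φ‖ ≤ L := by
  have hbound : ∀ᶠ v in 𝓝 (0 : V), φ v ≤ L * ‖v‖ := by
    have hmem : ∀ᶠ v in 𝓝 (0 : V), y + v ∈ K :=
      (continuous_const_add y).tendsto' 0 y (add_zero y) hK
    filter_upwards [hmem] with v hv
    have hlip := hF.dist_le_mul _ hv _ (mem_of_mem_nhds hK)
    rw [Real.dist_eq, dist_eq_norm, add_sub_cancel_left] at hlip
    have := hφ _ hv
    rw [add_sub_cancel_left] at this
    linarith [le_abs_self (F (y + v) - F y)]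
  refine φ.opNorm_le_of_nhds_zero L.2 ?_
  filter_upwards [hbound, (continuous_neg.tendsto' 0 0 neg_zero).eventually hbound]
    with v hv hnv
  rw [map_neg, norm_neg] at hnv
  exact abs_le.2 ⟨by linarith, hv⟩

theorem ConvexOn.subdifferential_nonempty {K : Set V} {F : V → ℝ} (hK : IsOpen K)
    (hF : ConvexOn ℝ K F) (hFc : ContinuousOn F K) {y : V} (hy : y ∈ K) :
    (subdifferential K F y).Nonempty := by
  set E := {p : V × ℝ | p.1 ∈ K ∧ F p.1 < p.2}
  have hEo : IsOpen E := by
    have := (continuous_snd.continuousOn.sub (hFc.comp continuous_fst.continuousOn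
      fun p hp => hp.1)).isOpen_inter_preimage (hK.prod isOpen_univ) (isOpen_Ioi (a := (0 : ℝ)))
    convert this using 1
    ext p
    simp [E, sub_pos]
  obtain ⟨f, hf⟩ := geometric_hahn_banach_point_open hF.convex_strict_epigraph hEo
    (x := (y, F y)) (by simp)
  set ℓ := f.comp (.inl ℝ V ℝ)
  set c := f (0, 1)
  have hf_apply : ∀ z t, f (z, t) = ℓ z + t * c := fun z t => by
    rw [show (z, t) = (z, 0) + t • ((0 : V), (1 : ℝ)) by simp, map_add, map_smul, smul_eq_mul]
    rfl
  have hsep : ∀ z ∈ K, ∀ t, F z < t → ℓ y + F y * c < ℓ z + t * c := fun z hz t ht => by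
    simpa [hf_apply] using hf (z, t) ⟨hz, ht⟩
  have hc : 0 < c := by
    have := hsep y hy (F y + 1) (by linarith)
    nlinarith
  refine ⟨-c⁻¹ • ℓ, fun z hz => le_of_forall_gt_imp_ge_of_dense fun t ht => ?_⟩
  have hquot : F y - t ≤ (ℓ z - ℓ y) / c := by
    rw [le_div_iff₀ hc]
    linarith [hsep z hz t ht]
  calc F y + (-c⁻¹ • ℓ) (z - y) = F y - (ℓ z - ℓ y) / c := by
        simp only [map_sub, smul_apply, smul_eq_mul, neg_mul, sub_neg_eq_add]
        ring
    _ ≤ t := by linarith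

theorem ConvexOn.mem_subdifferential_univ_of_mem_nhds {G : V → ℝ} {U : Set V} {y : V}
    {φ : V →L[ℝ] ℝ} (hG : ConvexOn ℝ univ G) (hU : U ∈ 𝓝 y)
    (hφ : φ ∈ subdifferential U G y) : φ ∈ subdifferential univ G y := by
  have hconv : ConvexOn ℝ univ fun z => G z - φ (z - y) := by
    have h : (fun z => G z - φ (z - y)) = G - (φ : V → ℝ) + fun _ => φ y := by
      funext z
      simp only [map_sub, Pi.add_apply, Pi.sub_apply]
      ring
    rw [h]
    exact (hG.sub (φ.toLinearMap.concaveOn convex_univ)).add_const _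
  have hmin : IsLocalMin (fun z => G z - φ (z - y)) y := by
    filter_upwards [hU] with z hz
    simp only [sub_self, map_zero, sub_zero]
    linarith [hφ z hz]
  intro z _
  have := IsMinOn.of_isLocalMin_of_convex_univ hmin hconv z
  simp only [sub_self, map_zero, sub_zero] at this
  linarith

def affineMinorant (F : V → ℝ) (y : V) (φ : V →L[ℝ] ℝ) (x : V) : ℝ :=
  F y + φ (x - y)

theorem convexOn_affineMinorant (F : V → ℝ) (y : V) (φ : V →L[ℝ] ℝ) :
    ConvexOn ℝ univ (affineMinorant F y φ) := by
  have h : affineMinorant F y φ = (φ : V → ℝ) + fun _ => F y - φ y := by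
    funext x
    simp only [affineMinorant, map_sub, Pi.add_apply]
    ring
  rw [h]
  exact (φ.toLinearMap.convexOn convex_univ).add_const _

theorem lipschitzWith_affineMinorant (F : V → ℝ) (y : V) {φ : V →L[ℝ] ℝ} {L : NNReal}
    (hφ : ‖φ‖ ≤ L) : LipschitzWith L (affineMinorant F y φ) :=
  LipschitzWith.of_dist_le_mul fun x x' => by
    rw [affineMinorant, affineMinorant, Real.dist_eq, add_sub_add_left_eq_sub, ← map_sub,
      sub_sub_sub_cancel_right, dist_eq_norm]
    exact (φ.le_opNorm _).trans (by gcongr)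

theorem affineMinorant_le_add_mul_norm {K : Set V} {F : V → ℝ} {y y₀ : V} {φ : V →L[ℝ] ℝ}
    {L : ℝ} (hφ : φ ∈ subdifferential K F y) (hφL : ‖φ‖ ≤ L) (hy₀ : y₀ ∈ K) (x : V) :
    affineMinorant F y φ x ≤ F y₀ + L * ‖x - y₀‖ :=
  calc F y + φ (x - y) = F y + φ (y₀ - y) + φ (x - y₀) := by
        rw [add_assoc, ← map_add, sub_add_sub_cancel']
    _ ≤ F y₀ + L * ‖x - y₀‖ := by
      gcongr
      · exact hφ y₀ hy₀
      · exact (le_abs_self _).trans ((φ.le_opNorm _).trans (by gcongr))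

theorem minConvExt_eq_iSup (K : Set V) (F : V → ℝ) :
    minConvExt K F =
      fun x => ⨆ p : Σ y : K, subdifferential K F y, affineMinorant F p.1 p.2 x := by
  ext x
  refine congrArg sSup (ext fun r => ⟨?_, ?_⟩)
  · rintro ⟨y, hy, φ, hφ, rfl⟩
    exact ⟨⟨⟨y, hy⟩, ⟨φ, hφ⟩⟩, rfl⟩
  · rintro ⟨⟨⟨y, hy⟩, ⟨φ, hφ⟩⟩, rfl⟩
    exact ⟨y, hy, φ, hφ, rfl⟩

end Subdifferential

theorem convex_lipschitz_extension_general {V : Type*} [NormedAddCommGroup V] [NormedSpace ℝ V]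
    (K : Set V) (hK : IsOpen K)
    (hKne : K.Nonempty) (F : V → ℝ) (L : NNReal)
    (hFconv : ConvexOn ℝ K F) (hFlip : LipschitzOnWith L F K) :
    ConvexOn ℝ Set.univ (minConvExt K F) ∧
    (∀ x ∈ K, minConvExt K F x = F x) ∧
    LipschitzWith L (minConvExt K F) ∧
    (∀ G : V → ℝ, ConvexOn ℝ Set.univ G → (∀ x ∈ K, G x = F x) →
      ∀ x, minConvExt K F x ≤ G x) := by
  have hsub {y} (hy : y ∈ K) := hFconv.subdifferential_nonempty hK hFlip.continuousOn hy
  have hnorm (p : Σ y : K, subdifferential K F y) : ‖(p.2 : V →L[ℝ] ℝ)‖ ≤ L :=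
    norm_le_of_mem_subdifferential (hK.mem_nhds p.1.2) hFlip p.2.2
  obtain ⟨y₀, hy₀⟩ := hKne
  have : Nonempty (Σ y : K, subdifferential K F y) :=
    ⟨⟨⟨y₀, hy₀⟩, (hsub hy₀).some, (hsub hy₀).some_mem⟩⟩
  have hbdd (x : V) : BddAbove (range fun p : Σ y : K, subdifferential K F y =>
      affineMinorant F p.1 p.2 x) :=
    ⟨_, forall_mem_range.2 fun p => affineMinorant_le_add_mul_norm p.2.2 (hnorm p) hy₀ x⟩
  rw [minConvExt_eq_iSup]
  refine ⟨ConvexOn.ciSup (fun p => convexOn_affineMinorant F _ _) fun x _ => hbdd x,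
    fun x hx => ?_,
    LipschitzWith.ciSup (fun p => lipschitzWith_affineMinorant F _ (hnorm p)) hbdd,
    fun G hG hGF x => ciSup_le fun p => ?_⟩
  · obtain ⟨φ, hφ⟩ := hsub hx
    refine le_antisymm (ciSup_le fun p => p.2.2 x hx) ?_
    exact le_ciSup_of_le (hbdd x) ⟨⟨x, hx⟩, φ, hφ⟩ (by simp [affineMinorant])
  · have hφG : (p.2 : V →L[ℝ] ℝ) ∈ subdifferential K G p.1 := fun z hz => by
      rw [hGF z hz, hGF _ p.1.2]
      exact p.2.2 z hz
    have := hG.mem_subdifferential_univ_of_mem_nhds (hK.mem_nhds p.1.2) hφG x (mem_univ x)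
    rwa [hGF _ p.1.2] at this

theorem convex_lipschitz_extension {V : Type*} [NormedAddCommGroup V] [NormedSpace ℝ V]
    [FiniteDimensional ℝ V] (K : Set V) (hK : IsOpen K) (hKc : Convex ℝ K)
    (hKne : K.Nonempty) (F : V → ℝ) (L : NNReal)
    (hFconv : ConvexOn ℝ K F) (hFlip : LipschitzOnWith L F K) :
    ConvexOn ℝ Set.univ (minConvExt K F) ∧
    (∀ x ∈ K, minConvExt K F x = F x) ∧
    LipschitzWith L (minConvExt K F) ∧
    (∀ G : V → ℝ, ConvexOn ℝ Set.univ G → (∀ x ∈ K, G x = F x) →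
      ∀ x, minConvExt K F x ≤ G x) :=
  convex_lipschitz_extension_general K hK hKne F L hFconv hFlip
end

section
/- If K_a, a > 0, is a nested increasing family of open convex subsets of a finite-dimensional normed space V whose union is V, and F : V → ℝ is convex and Lipschitz on each K_a, then the minimal convex extensions F_a of F|_{K_a} satisfy: for every x ∈ V, F_a(x) is nondecreasing in a and F_a(x) → F(x) as a → ∞. -/
/-!
A functional supporting the convex function `F` on a neighbourhood of `y` supports it globally,
because a local minimum of the convex function `F - φ` is a global one. A continuous convex
function has a supporting functional at every point: Hahn–Banach separates `(y, F y)` from the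
open convex strict epigraph. Hence, for open nonempty `K`, the supremum defining `F_K` is over
global minorants, so `F_K ≤ F`, `F_K` grows with `K`, and `F_K x = F x` as soon as `x ∈ K`.
Thus `a ↦ F_a x` is eventually equal to `F x`. Continuity of `F` comes from the local Lipschitz
bounds.
-/

open Set Filter Topology

section Subgradient

variable {E : Type*} [AddCommGroup E] [TopologicalSpace E] [Module ℝ E]

def IsSubgradientOn (F : E → ℝ) (s : Set E) (y : E) (φ : E →L[ℝ] ℝ) : Prop :=
  ∀ z ∈ s, F y + φ (z - y) ≤ F z

variable {F : E → ℝ}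

theorem isSubgradientOn_iff_le_sub {s : Set E} {y : E} {φ : E →L[ℝ] ℝ} :
    IsSubgradientOn F s y φ ↔ ∀ z ∈ s, F y - φ y ≤ F z - φ z := by
  refine forall₂_congr fun z _ => ?_
  rw [map_sub]
  constructor <;> intro h <;> linarith

variable [IsTopologicalAddGroup E] [ContinuousSMul ℝ E]

theorem ConvexOn.isSubgradientOn_univ_of_mem_nhds (hF : ConvexOn ℝ univ F) {s : Set E} {y : E}
    {φ : E →L[ℝ] ℝ} (hs : s ∈ 𝓝 y) (hφ : IsSubgradientOn F s y φ) :
    IsSubgradientOn F univ y φ := by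
  rw [isSubgradientOn_iff_le_sub] at hφ ⊢
  have hmin : IsLocalMin (fun z => F z - φ z) y := Filter.mem_of_superset hs hφ
  exact fun z _ => IsMinOn.of_isLocalMin_of_convex_univ hmin
    (hF.sub (φ.toLinearMap.concaveOn convex_univ)) z

theorem ConvexOn.exists_isSubgradientOn_univ (hF : ConvexOn ℝ univ F) (hc : Continuous F)
    (y : E) : ∃ φ : E →L[ℝ] ℝ, IsSubgradientOn F univ y φ := by
  have hopen : IsOpen {p : E × ℝ | F p.1 < p.2} :=
    isOpen_lt (hc.comp continuous_fst) continuous_snd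
  have hconv : Convex ℝ {p : E × ℝ | F p.1 < p.2} := by
    simpa using hF.convex_strict_epigraph
  obtain ⟨f, hf⟩ := geometric_hahn_banach_open_point hconv hopen (x := (y, F y)) (lt_irrefl (F y))
  set c := - f (0, 1)
  have hsplit : ∀ z t, f (z, t) = f (z, 0) - t * c := by
    intro z t
    rw [show ((z, t) : E × ℝ) = (z, 0) + t • (0, 1) by simp, map_add, map_smul, smul_eq_mul]
    ring
  have hc : 0 < c := by
    linarith [hf (y, F y + 1) (by simp), hsplit y (F y + 1), hsplit y (F y)]
  -- For `t > F z`, separating `(z, t)` from `(y, F y)` reads `F y + c⁻¹ f (z - y, 0) < t`.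
  refine ⟨c⁻¹ • f.comp (ContinuousLinearMap.inl ℝ E ℝ), fun z _ => le_of_forall_gt fun t ht => ?_⟩
  have hsep := hf (z, t) ht
  rw [hsplit z t, hsplit y (F y)] at hsep
  have hdiff : c⁻¹ * f (z - y, 0) < t - F y := by
    rw [inv_mul_lt_iff₀ hc, show ((z - y, 0) : E × ℝ) = (z, 0) - (y, 0) by simp, map_sub]
    linarith
  simp only [smul_apply, ContinuousLinearMap.comp_apply, ContinuousLinearMap.inl_apply,
    smul_eq_mul]
  linarith

end Subgradient

section MinConvExt

variable {V : Type*} [NormedAddCommGroup V] [NormedSpace ℝ V] {K K' : Set V} {F : V → ℝ}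

theorem ConvexOn.bddAbove_minConvExt_set (hF : ConvexOn ℝ univ F) (hK : IsOpen K) (x : V) :
    BddAbove {r | ∃ y ∈ K, ∃ φ : V →L[ℝ] ℝ, IsSubgradientOn F K y φ ∧ r = F y + φ (x - y)} := by
  refine ⟨F x, ?_⟩
  rintro r ⟨y, hy, φ, hφ, rfl⟩
  exact hF.isSubgradientOn_univ_of_mem_nhds (hK.mem_nhds hy) hφ x trivial

theorem ConvexOn.minConvExt_set_nonempty (hF : ConvexOn ℝ univ F) (hc : Continuous F)
    (hK : K.Nonempty) (x : V) :
    {r | ∃ y ∈ K, ∃ φ : V →L[ℝ] ℝ, IsSubgradientOn F K y φ ∧ r = F y + φ (x - y)}.Nonempty := by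
  obtain ⟨y, hy⟩ := hK
  obtain ⟨φ, hφ⟩ := hF.exists_isSubgradientOn_univ hc y
  exact ⟨_, y, hy, φ, fun z _ => hφ z trivial, rfl⟩

theorem ConvexOn.le_minConvExt (hF : ConvexOn ℝ univ F) (hK : IsOpen K) {y : V} (hy : y ∈ K)
    {φ : V →L[ℝ] ℝ} (hφ : IsSubgradientOn F K y φ) (x : V) :
    F y + φ (x - y) ≤ minConvExt K F x :=
  le_csSup (hF.bddAbove_minConvExt_set hK x) ⟨y, hy, φ, hφ, rfl⟩

theorem ConvexOn.minConvExt_le (hF : ConvexOn ℝ univ F) (hc : Continuous F) (hK : IsOpen K)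
    (hKne : K.Nonempty) (x : V) : minConvExt K F x ≤ F x :=
  csSup_le (hF.minConvExt_set_nonempty hc hKne x) fun _ ⟨_, hy, _, hφ, hr⟩ =>
    hr ▸ hF.isSubgradientOn_univ_of_mem_nhds (hK.mem_nhds hy) hφ x trivial

theorem ConvexOn.minConvExt_mono (hF : ConvexOn ℝ univ F) (hc : Continuous F) (hK : IsOpen K)
    (hK' : IsOpen K') (hKne : K.Nonempty) (hKK' : K ⊆ K') (x : V) :
    minConvExt K F x ≤ minConvExt K' F x := by
  refine csSup_le (hF.minConvExt_set_nonempty hc hKne x) ?_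
  rintro r ⟨y, hy, φ, hφ, rfl⟩
  have hφ_univ := hF.isSubgradientOn_univ_of_mem_nhds (hK.mem_nhds hy) hφ
  exact hF.le_minConvExt hK' (hKK' hy) (fun z _ => hφ_univ z trivial) x

theorem ConvexOn.minConvExt_eq_of_mem (hF : ConvexOn ℝ univ F) (hc : Continuous F)
    (hK : IsOpen K) {x : V} (hx : x ∈ K) : minConvExt K F x = F x := by
  refine le_antisymm (hF.minConvExt_le hc hK ⟨x, hx⟩ x) ?_
  obtain ⟨φ, hφ⟩ := hF.exists_isSubgradientOn_univ hc x
  simpa using hF.le_minConvExt hK hx (fun z _ => hφ z trivial) x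

end MinConvExt

theorem minimal_convex_extensions_increase_to_F_general {V : Type*} [NormedAddCommGroup V]
    [NormedSpace ℝ V]
    (K : ℝ → Set V)
    (hopen : ∀ a > (0:ℝ), IsOpen (K a))
    (hne : ∀ a > (0:ℝ), (K a).Nonempty)
    (hnested : ∀ a b : ℝ, 0 < a → a ≤ b → K a ⊆ K b)
    (hunion : ⋃ a ∈ Set.Ioi (0:ℝ), K a = Set.univ)
    (F : V → ℝ) (hF : ConvexOn ℝ Set.univ F)
    (hFlip : ∀ a > (0:ℝ), ∃ L : NNReal, LipschitzOnWith L F (K a)) :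
    ∀ x : V,
      (∀ a b : ℝ, 0 < a → a ≤ b → minConvExt (K a) F x ≤ minConvExt (K b) F x) ∧
      Tendsto (fun a : ℝ => minConvExt (K a) F x) atTop (nhds (F x)) := by
  have hcover : ∀ x, ∃ a > 0, x ∈ K a := fun x => by simpa using hunion.ge (mem_univ x)
  have hc : Continuous F := LocallyLipschitz.continuous fun x => by
    obtain ⟨a, ha, hxa⟩ := hcover x
    obtain ⟨L, hL⟩ := hFlip a ha
    exact ⟨L, K a, (hopen a ha).mem_nhds hxa, hL⟩
  intro x
  refine ⟨fun a b ha hab => hF.minConvExt_mono hc (hopen a ha) (hopen b (ha.trans_le hab))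
    (hne a ha) (hnested a b ha hab) x, ?_⟩
  obtain ⟨a₀, ha₀, hxa₀⟩ := hcover x
  refine tendsto_const_nhds.congr' (eventually_atTop.2 ⟨a₀, fun a ha => ?_⟩)
  exact (hF.minConvExt_eq_of_mem hc (hopen a (ha₀.trans_le ha)) (hnested a₀ a ha₀ ha hxa₀)).symm

theorem minimal_convex_extensions_increase_to_F {V : Type*} [NormedAddCommGroup V]
    [NormedSpace ℝ V] [FiniteDimensional ℝ V]
    (K : ℝ → Set V)
    (hopen : ∀ a > (0:ℝ), IsOpen (K a))
    (hconv : ∀ a > (0:ℝ), Convex ℝ (K a))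
    (hne : ∀ a > (0:ℝ), (K a).Nonempty)
    (hnested : ∀ a b : ℝ, 0 < a → a ≤ b → K a ⊆ K b)
    (hunion : ⋃ a ∈ Set.Ioi (0:ℝ), K a = Set.univ)
    (F : V → ℝ) (hF : ConvexOn ℝ Set.univ F)
    (hFlip : ∀ a > (0:ℝ), ∃ L : NNReal, LipschitzOnWith L F (K a)) :
    ∀ x : V,
      (∀ a b : ℝ, 0 < a → a ≤ b → minConvExt (K a) F x ≤ minConvExt (K b) F x) ∧
      Tendsto (fun a : ℝ => minConvExt (K a) F x) atTop (nhds (F x)) :=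
  minimal_convex_extensions_increase_to_F_general K hopen hne hnested hunion F hF hFlip
end

section
/- If φ : ℝ → ℝ is convex, then the map A ↦ tr φ(A) on the space of n×n Hermitian matrices is convex, where φ(A) is defined by functional calculus (equivalently, tr φ(A) = Σᵢ φ(λᵢ(A)) where λᵢ(A) are the eigenvalues of A). -/
/-!
For a unitary `W`, the map `A ↦ ∑ i, φ (Re (Wᴴ A W)ᵢᵢ)` is convex, being a sum of `φ` composed
with real-linear functionals. It is bounded above by `∑ i, φ (λᵢ(A))` (Peierls): if `V`
diagonalises `A`, the diagonal of `Wᴴ A W` is the image of the spectrum under the doubly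
stochastic matrix `|(Wᴴ V)ᵢⱼ|²`, so Jensen's inequality applies. Equality holds for `W = V`, so
`A ↦ ∑ i, φ (λᵢ(A))` is a pointwise attained supremum of convex functions.
-/

open Matrix

namespace Matrix

variable {𝕜 m n : Type*} [RCLike 𝕜] [Fintype n] [DecidableEq n]

theorem mul_diagonal_mul_conjTranspose_apply_self (M : Matrix m n 𝕜) (d : n → ℝ) (i : m) :
    (M * diagonal (RCLike.ofReal ∘ d : n → 𝕜) * Mᴴ) i i = ((∑ j, ‖M i j‖ ^ 2 * d j : ℝ) : 𝕜) := by
  simp only [mul_apply, diagonal_apply, conjTranspose_apply, Function.comp_apply, mul_ite, mul_zero,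
    Finset.sum_ite_eq', Finset.mem_univ, if_true, RCLike.ofReal_sum, RCLike.ofReal_mul,
    RCLike.ofReal_pow]
  refine Finset.sum_congr rfl fun j _ => ?_
  rw [mul_right_comm, RCLike.star_def, RCLike.mul_conj]

theorem sum_norm_sq_apply_eq_one_of_mem_unitaryGroup {U : Matrix n n 𝕜} (hU : U ∈ unitaryGroup n 𝕜) (i : n) :
    ∑ j, ‖U i j‖ ^ 2 = 1 := by
  have hUU : U * Uᴴ = 1 := mem_unitaryGroup_iff.1 hU
  have h := mul_diagonal_mul_conjTranspose_apply_self U 1 i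
  simp only [Pi.one_apply, Function.comp_def, RCLike.ofReal_one, diagonal_one, mul_one, hUU,
    one_apply_eq] at h
  exact_mod_cast h.symm

theorem of_norm_sq_mem_doublyStochastic {U : Matrix n n 𝕜} (hU : U ∈ unitaryGroup n 𝕜) :
    of (fun i j => ‖U i j‖ ^ 2) ∈ doublyStochastic ℝ n := by
  refine mem_doublyStochastic_iff_sum.2 ⟨fun _ _ => sq_nonneg _, sum_norm_sq_apply_eq_one_of_mem_unitaryGroup hU,
    fun j => ?_⟩
  simpa using sum_norm_sq_apply_eq_one_of_mem_unitaryGroup (Unitary.star_mem hU) j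

theorem sum_map_mulVec_le_of_mem_doublyStochastic {M : Matrix n n ℝ}
    (hM : M ∈ doublyStochastic ℝ n) {s : Set ℝ} {φ : ℝ → ℝ} (hφ : ConvexOn ℝ s φ) {x : n → ℝ}
    (hx : ∀ j, x j ∈ s) : ∑ i, φ ((M *ᵥ x) i) ≤ ∑ j, φ (x j) :=
  calc ∑ i, φ ((M *ᵥ x) i)
      ≤ ∑ i, ∑ j, M i j * φ (x j) := Finset.sum_le_sum fun i _ => by
        simpa only [mulVec, dotProduct, smul_eq_mul] using
          hφ.map_sum_le (fun j _ => nonneg_of_mem_doublyStochastic hM)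
            (sum_row_of_mem_doublyStochastic hM i) fun j _ => hx j
    _ = ∑ j, φ (x j) := by
        rw [Finset.sum_comm]
        simp only [← Finset.sum_mul, sum_col_of_mem_doublyStochastic hM, one_mul]

theorem IsHermitian.sum_map_re_diag_le_sum_map_eigenvalues {A : Matrix n n 𝕜} (hA : A.IsHermitian)
    {W : Matrix n n 𝕜} (hW : W ∈ unitaryGroup n 𝕜) {s : Set ℝ} {φ : ℝ → ℝ}
    (hφ : ConvexOn ℝ s φ) (hs : ∀ j, hA.eigenvalues j ∈ s) :
    ∑ i, φ (RCLike.re ((Wᴴ * A * W) i i)) ≤ ∑ j, φ (hA.eigenvalues j) := by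
  set U : Matrix n n 𝕜 := Wᴴ * hA.eigenvectorUnitary
  have hU : U ∈ unitaryGroup n 𝕜 := mul_mem (Unitary.star_mem hW) hA.eigenvectorUnitary.2
  have hdiag : ∀ i, RCLike.re ((Wᴴ * A * W) i i) =
      (of (fun i j => ‖U i j‖ ^ 2) *ᵥ hA.eigenvalues) i := fun i => by
    have hconj : Wᴴ * A * W = U * diagonal (RCLike.ofReal ∘ hA.eigenvalues : n → 𝕜) * Uᴴ := by
      conv_lhs => rw [hA.spectral_theorem]
      simp only [U, Unitary.conjStarAlgAut_apply, ← star_eq_conjTranspose, star_mul, star_star,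
        Matrix.mul_assoc]
    rw [hconj, mul_diagonal_mul_conjTranspose_apply_self, RCLike.ofReal_re]
    rfl
  simpa only [hdiag] using
    sum_map_mulVec_le_of_mem_doublyStochastic (of_norm_sq_mem_doublyStochastic hU) hφ hs

theorem IsHermitian.re_diag_eigenvectorUnitary {A : Matrix n n 𝕜} (hA : A.IsHermitian) (i : n) :
    RCLike.re (((hA.eigenvectorUnitary : Matrix n n 𝕜)ᴴ * A * hA.eigenvectorUnitary) i i) =
      hA.eigenvalues i := by
  rw [← star_eq_conjTranspose, ← Unitary.conjStarAlgAut_star_apply (S := 𝕜),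
    hA.conjStarAlgAut_star_eigenvectorUnitary, diagonal_apply_eq, Function.comp_apply,
    RCLike.ofReal_re]

omit [DecidableEq n] in
theorem convexOn_sum_map_re_diag_conj (W : Matrix n n 𝕜) {φ : ℝ → ℝ}
    (hφ : ConvexOn ℝ Set.univ φ) :
    ConvexOn ℝ Set.univ fun A : Matrix n n 𝕜 => ∑ i, φ (RCLike.re ((Wᴴ * A * W) i i)) := by
  refine ⟨convex_univ, fun A _ B _ a b ha hb hab => ?_⟩
  simp only [Matrix.mul_add, Matrix.add_mul, Matrix.mul_smul, Matrix.smul_mul, add_apply,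
    smul_apply, map_add, RCLike.smul_re, smul_eq_mul, Finset.mul_sum, ← Finset.sum_add_distrib]
  exact Finset.sum_le_sum fun i _ => hφ.2 trivial trivial ha hb hab

end Matrix

theorem trace_phi_convex (n : ℕ) (φ : ℝ → ℝ) (hφ : ConvexOn ℝ Set.univ φ) :
    ConvexOn ℝ {A : Matrix (Fin n) (Fin n) ℂ | A.IsHermitian}
      (fun A : Matrix (Fin n) (Fin n) ℂ =>
        if h : A.IsHermitian then ∑ i, φ (h.eigenvalues i) else 0) := by
  refine ⟨(selfAdjoint.submodule ℝ (Matrix (Fin n) (Fin n) ℂ)).convex,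
    fun A (hA : A.IsHermitian) B (hB : B.IsHermitian) a b ha hb hab => ?_⟩
  have hC : (a • A + b • B).IsHermitian :=
    (selfAdjoint.submodule ℝ (Matrix (Fin n) (Fin n) ℂ)).convex hA hB ha hb hab
  simp only [dif_pos hA, dif_pos hB, dif_pos hC, smul_eq_mul]
  set W : Matrix (Fin n) (Fin n) ℂ := (hC.eigenvectorUnitary : Matrix (Fin n) (Fin n) ℂ)
  calc ∑ i, φ (hC.eigenvalues i)
      = ∑ i, φ (RCLike.re ((Wᴴ * (a • A + b • B) * W) i i)) := by
        simp only [W, hC.re_diag_eigenvectorUnitary]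
    _ ≤ a * ∑ i, φ (RCLike.re ((Wᴴ * A * W) i i)) + b * ∑ i, φ (RCLike.re ((Wᴴ * B * W) i i)) :=
        (convexOn_sum_map_re_diag_conj W hφ).2 trivial trivial ha hb hab
    _ ≤ a * ∑ i, φ (hA.eigenvalues i) + b * ∑ i, φ (hB.eigenvalues i) := by
        have hW := hC.eigenvectorUnitary.2
        gcongr _ * ?_ + _ * ?_
        · exact hA.sum_map_re_diag_le_sum_map_eigenvalues hW hφ fun _ => trivial
        · exact hB.sum_map_re_diag_le_sum_map_eigenvalues hW hφ fun _ => trivial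
end

section
/- For any integer d ≥ 3 odd, the functions F^±(A) = Σᵢ (λᵢ(A))_±^d are convex on the space of n×n Hermitian matrices, and tr(A^d) = F^+(A) − F^−(A). -/
/-!
For convex `f`, the spectral sum `A ↦ ∑ᵢ f (λᵢ A)` is convex on Hermitian matrices. If `u` is an
eigenbasis of `C = a • A + b • B`, then `λᵢ C = a ⟪uᵢ, A uᵢ⟫ + b ⟪uᵢ, B uᵢ⟫`, so convexity of `f`
reduces the claim to Peierls' inequality `∑ᵢ f ⟪uᵢ, A uᵢ⟫ ≤ ∑ⱼ f (λⱼ A)` for every orthonormal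
basis `u`. That inequality holds because `⟪uᵢ, A uᵢ⟫ = ∑ⱼ |⟪uᵢ, vⱼ⟫|² λⱼ A` for an eigenbasis `v`
of `A`, and the matrix `|⟪uᵢ, vⱼ⟫|²` is doubly stochastic. Both `x ↦ (x₊)ᵈ` and `x ↦ (x₋)ᵈ` are
convex, and for odd `d` we have `xᵈ = (x₊)ᵈ - (x₋)ᵈ`, which gives the trace identity after
diagonalising `A`.
-/

open Matrix

theorem ConvexOn.sum_comp_mulVec_le_of_mem_doublyStochastic {R n : Type*} [Field R] [LinearOrder R]
    [IsStrictOrderedRing R] [Fintype n] [DecidableEq n] {f : R → R} {s : Set R}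
    (hf : ConvexOn R s f) {M : Matrix n n R} (hM : M ∈ doublyStochastic R n) {x : n → R}
    (hx : ∀ j, x j ∈ s) :
    ∑ i, f ((M *ᵥ x) i) ≤ ∑ j, f (x j) :=
  calc ∑ i, f ((M *ᵥ x) i) ≤ ∑ i, ∑ j, M i j * f (x j) := by
        gcongr with i
        exact hf.map_sum_le (fun j _ => nonneg_of_mem_doublyStochastic hM)
          (sum_row_of_mem_doublyStochastic hM i) (fun j _ => hx j)
    _ = ∑ j, f (x j) := by
        rw [Finset.sum_comm]
        simp_rw [← Finset.sum_mul, sum_col_of_mem_doublyStochastic hM, one_mul]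

theorem OrthonormalBasis.sq_norm_inner_mem_doublyStochastic {𝕜 E n : Type*} [RCLike 𝕜]
    [NormedAddCommGroup E] [InnerProductSpace 𝕜 E] [Fintype n] [DecidableEq n]
    (u v : OrthonormalBasis n 𝕜 E) :
    Matrix.of (fun i j => ‖inner 𝕜 (u i) (v j)‖ ^ 2) ∈ doublyStochastic ℝ n := by
  rw [mem_doublyStochastic_iff_sum]
  refine ⟨fun i j => sq_nonneg _, fun i => ?_, fun j => ?_⟩
  · simp [v.sum_sq_norm_inner_left, u.orthonormal.1 i]
  · simp [u.sum_sq_norm_inner_right, v.orthonormal.1 j]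

theorem convexOn_max_zero_pow (d : ℕ) : ConvexOn ℝ Set.univ (fun x : ℝ => max 0 x ^ d) :=
  ((convexOn_const 0 convex_univ).sup (convexOn_id convex_univ)).pow (fun _ _ => le_sup_left) d

theorem convexOn_max_zero_neg_pow (d : ℕ) : ConvexOn ℝ Set.univ (fun x : ℝ => max 0 (-x) ^ d) :=
  (convexOn_max_zero_pow d).comp_linearMap (-LinearMap.id)

theorem Odd.pow_eq_max_zero_pow_sub {R : Type*} [Ring R] [LinearOrder R] [IsStrictOrderedRing R]
    {d : ℕ} (hd : Odd d) (x : R) : x ^ d = max 0 x ^ d - max 0 (-x) ^ d := by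
  rcases le_total 0 x with hx | hx
  · simp [hx, hd.pos.ne']
  · simp [hx, hd.pos.ne', hd.neg_pow]

namespace Matrix.IsHermitian

variable {𝕜 n : Type*} [RCLike 𝕜] [Fintype n] [DecidableEq n] {A : Matrix n n 𝕜}

theorem re_star_dotProduct_mulVec_eq_sum (hA : A.IsHermitian) (x : EuclideanSpace 𝕜 n) :
    RCLike.re (star ⇑x ⬝ᵥ A *ᵥ ⇑x) =
      ∑ j, ‖inner 𝕜 x (hA.eigenvectorBasis j)‖ ^ 2 * hA.eigenvalues j := by
  have hAx : star ⇑x ⬝ᵥ A *ᵥ ⇑x = inner 𝕜 x (toEuclideanLin A x) := by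
    rw [EuclideanSpace.inner_eq_star_dotProduct, dotProduct_comm]
    rfl
  have hb (j : n) : inner 𝕜 (hA.eigenvectorBasis j) (toEuclideanLin A x) =
      hA.eigenvalues j * inner 𝕜 (hA.eigenvectorBasis j) x := by
    have hTb : toEuclideanLin A (hA.eigenvectorBasis j) =
        (hA.eigenvalues j : 𝕜) • hA.eigenvectorBasis j := by
      ext1
      simp [toLpLin_apply, hA.mulVec_eigenvectorBasis, RCLike.real_smul_eq_coe_mul]
    rw [← isSymmetric_toEuclideanLin_iff.mpr hA, hTb, inner_smul_left, RCLike.conj_ofReal]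
  rw [hAx, ← hA.eigenvectorBasis.sum_inner_mul_inner, map_sum]
  congr 1 with j
  rw [hb, mul_left_comm, ← inner_conj_symm x, RCLike.conj_mul, RCLike.norm_conj,
    ← RCLike.ofReal_pow, ← RCLike.ofReal_mul, RCLike.ofReal_re, mul_comm]

/-- Peierls' inequality. -/
theorem sum_comp_re_star_dotProduct_mulVec_le (hA : A.IsHermitian) {f : ℝ → ℝ} {s : Set ℝ}
    (hf : ConvexOn ℝ s f) (hs : ∀ j, hA.eigenvalues j ∈ s)
    (u : OrthonormalBasis n 𝕜 (EuclideanSpace 𝕜 n)) :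
    ∑ i, f (RCLike.re (star ⇑(u i) ⬝ᵥ A *ᵥ ⇑(u i))) ≤ ∑ j, f (hA.eigenvalues j) := by
  have h := hf.sum_comp_mulVec_le_of_mem_doublyStochastic
    (u.sq_norm_inner_mem_doublyStochastic hA.eigenvectorBasis) hs
  simp only [mulVec, dotProduct, of_apply] at h
  simpa only [hA.re_star_dotProduct_mulVec_eq_sum] using h

theorem eigenvalues_smul_add_smul {B : Matrix n n 𝕜} (a b : ℝ)
    (hC : (a • A + b • B).IsHermitian) (i : n) :
    hC.eigenvalues i =
      a * RCLike.re (star ⇑(hC.eigenvectorBasis i) ⬝ᵥ A *ᵥ ⇑(hC.eigenvectorBasis i)) +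
        b * RCLike.re (star ⇑(hC.eigenvectorBasis i) ⬝ᵥ B *ᵥ ⇑(hC.eigenvectorBasis i)) := by
  rw [hC.eigenvalues_eq, add_mulVec, smul_mulVec, smul_mulVec, dotProduct_add, dotProduct_smul,
    dotProduct_smul, map_add, RCLike.smul_re, RCLike.smul_re]

theorem trace_pow_eq_sum_eigenvalues_pow (hA : A.IsHermitian) (d : ℕ) :
    (A ^ d).trace = ∑ i, (hA.eigenvalues i : 𝕜) ^ d := by
  conv_lhs => rw [hA.spectral_theorem, ← map_pow, Unitary.conjStarAlgAut_apply, trace_mul_cycle,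
    Unitary.coe_star_mul_self, one_mul, diagonal_pow, trace_diagonal]
  rfl

end Matrix.IsHermitian

theorem Matrix.convexOn_sum_comp_eigenvalues {𝕜 n : Type*} [RCLike 𝕜] [Fintype n]
    [DecidableEq n] {f : ℝ → ℝ} (hf : ConvexOn ℝ Set.univ f) :
    ConvexOn ℝ {A : Matrix n n 𝕜 | A.IsHermitian}
      (fun A => if h : A.IsHermitian then ∑ i, f (h.eigenvalues i) else 0) := by
  have hconv : Convex ℝ {A : Matrix n n 𝕜 | A.IsHermitian} :=
    (selfAdjoint.submodule ℝ (Matrix n n 𝕜)).convex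
  refine ⟨hconv, fun A (hA : A.IsHermitian) B (hB : B.IsHermitian) a b ha hb hab => ?_⟩
  have hC : (a • A + b • B).IsHermitian := hconv hA hB ha hb hab
  simp only [dif_pos hA, dif_pos hB, dif_pos hC, smul_eq_mul]
  set u := hC.eigenvectorBasis
  calc ∑ i, f (hC.eigenvalues i)
      ≤ ∑ i, (a * f (RCLike.re (star ⇑(u i) ⬝ᵥ A *ᵥ ⇑(u i))) +
          b * f (RCLike.re (star ⇑(u i) ⬝ᵥ B *ᵥ ⇑(u i)))) := by
        gcongr with i
        rw [IsHermitian.eigenvalues_smul_add_smul a b hC]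
        exact hf.2 trivial trivial ha hb hab
    _ = a * ∑ i, f (RCLike.re (star ⇑(u i) ⬝ᵥ A *ᵥ ⇑(u i))) +
          b * ∑ i, f (RCLike.re (star ⇑(u i) ⬝ᵥ B *ᵥ ⇑(u i))) := by
        rw [Finset.sum_add_distrib, Finset.mul_sum, Finset.mul_sum]
    _ ≤ a * ∑ i, f (hA.eigenvalues i) + b * ∑ i, f (hB.eigenvalues i) := by
        gcongr a * ?_ + b * ?_
        · exact hA.sum_comp_re_star_dotProduct_mulVec_le hf (fun _ => trivial) u
        · exact hB.sum_comp_re_star_dotProduct_mulVec_le hf (fun _ => trivial) u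

theorem trace_pow_odd_decomposition_general (n d : ℕ) (hdo : Odd d) :
    ConvexOn ℝ {A : Matrix (Fin n) (Fin n) ℂ | A.IsHermitian}
      (fun A : Matrix (Fin n) (Fin n) ℂ =>
        if h : A.IsHermitian then ∑ i, (max 0 (h.eigenvalues i)) ^ d else 0) ∧
    ConvexOn ℝ {A : Matrix (Fin n) (Fin n) ℂ | A.IsHermitian}
      (fun A : Matrix (Fin n) (Fin n) ℂ =>
        if h : A.IsHermitian then ∑ i, (max 0 (-(h.eigenvalues i))) ^ d else 0) ∧
    ∀ (A : Matrix (Fin n) (Fin n) ℂ) (h : A.IsHermitian),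
      ((A ^ d).trace).re =
        (∑ i, (max 0 (h.eigenvalues i)) ^ d) - ∑ i, (max 0 (-(h.eigenvalues i))) ^ d := by
  refine ⟨convexOn_sum_comp_eigenvalues (convexOn_max_zero_pow d),
    convexOn_sum_comp_eigenvalues (convexOn_max_zero_neg_pow d), fun A hA => ?_⟩
  rw [hA.trace_pow_eq_sum_eigenvalues_pow, ← Finset.sum_sub_distrib, Complex.re_sum]
  congr 1 with i
  rw [← hdo.pow_eq_max_zero_pow_sub]
  norm_cast

theorem trace_pow_odd_decomposition (n d : ℕ) (hd : 3 ≤ d) (hdo : Odd d) :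
    ConvexOn ℝ {A : Matrix (Fin n) (Fin n) ℂ | A.IsHermitian}
      (fun A : Matrix (Fin n) (Fin n) ℂ =>
        if h : A.IsHermitian then ∑ i, (max 0 (h.eigenvalues i)) ^ d else 0) ∧
    ConvexOn ℝ {A : Matrix (Fin n) (Fin n) ℂ | A.IsHermitian}
      (fun A : Matrix (Fin n) (Fin n) ℂ =>
        if h : A.IsHermitian then ∑ i, (max 0 (-(h.eigenvalues i))) ^ d else 0) ∧
    ∀ (A : Matrix (Fin n) (Fin n) ℂ) (h : A.IsHermitian),
      ((A ^ d).trace).re =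
        (∑ i, (max 0 (h.eigenvalues i)) ^ d) - ∑ i, (max 0 (-(h.eigenvalues i))) ^ d :=
  trace_pow_odd_decomposition_general n d hdo
end

section
/- The map sending an n×n Hermitian matrix A to its vector of eigenvalues (λ₁(A), …, λₙ(A)) arranged in nonincreasing order is 1-Lipschitz from (M_n^{sa}, Hilbert-Schmidt norm) to (ℝⁿ, Euclidean norm). -/
/-!
Write `A = U D_A U⋆` and `B = V D_B V⋆` with `D_A = diag λ`, `D_B = diag κ`. The Frobenius norm
is unitarily invariant, so with `W = U⋆ V` we get
`‖A - B‖² = ‖D_A W - W D_B‖² = ∑ᵢⱼ |Wᵢⱼ|² (λᵢ - κⱼ)²`.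
The matrix `(|Wᵢⱼ|²)` is doubly stochastic, hence by Birkhoff's theorem a convex combination of
permutation matrices, and the right-hand side is at least `min_π ∑ᵢ (λᵢ - κ_{π i})²`. By the
rearrangement inequality this minimum is attained when both spectra are listed in the same order.
-/

open Matrix

attribute [local instance] Matrix.frobeniusNormedAddCommGroup

open Finset

theorem Monovary.sum_sub_sq_le_sum_sub_comp_perm_sq {ι R : Type*} [Fintype ι] [CommRing R]
    [LinearOrder R] [IsStrictOrderedRing R] {f g : ι → R} (hfg : Monovary f g)
    (σ : Equiv.Perm ι) :
    ∑ i, (f i - g i) ^ 2 ≤ ∑ i, (f i - g (σ i)) ^ 2 := by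
  have hg : ∑ i, g (σ i) ^ 2 = ∑ i, g i ^ 2 := Equiv.sum_comp σ fun i => g i ^ 2
  have hfg' := hfg.sum_mul_comp_perm_le_sum_mul (σ := σ)
  simp only [sub_sq, sum_add_distrib, sum_sub_distrib, mul_assoc, ← mul_sum, hg]
  linarith

theorem le_sum_mul_of_mem_doublyStochastic {n R : Type*} [Fintype n] [DecidableEq n] [Field R]
    [LinearOrder R] [IsStrictOrderedRing R] {M : Matrix n n R} (hM : M ∈ doublyStochastic R n)
    {φ : n → n → R} {c : R} (h : ∀ σ : Equiv.Perm n, c ≤ ∑ i, φ i (σ i)) :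
    c ≤ ∑ i, ∑ j, M i j * φ i j := by
  let F : Matrix n n R →ₗ[R] R :=
    { toFun := fun M => ∑ i, ∑ j, M i j * φ i j
      map_add' := fun _ _ => by simp only [Matrix.add_apply, add_mul, sum_add_distrib]
      map_smul' := fun _ _ => by simp [mul_assoc, mul_sum] }
  have hperm : {P | ∃ σ : Equiv.Perm n, σ.permMatrix R = P} ⊆ {P | c ≤ F P} := by
    rintro _ ⟨σ, rfl⟩
    simpa [F, Equiv.Perm.permMatrix, PEquiv.toMatrix_apply, Equiv.toPEquiv_apply] using h σ
  rw [← SetLike.mem_coe, doublyStochastic_eq_convexHull_permMatrix] at hM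
  exact convexHull_min hperm (convex_halfSpace_ge F.isLinear c) hM

section Frobenius

variable {𝕜 m n : Type*} [RCLike 𝕜] [Fintype m] [Fintype n]

theorem frobenius_norm_sq_eq_sum {α : Type*} [NormedAddCommGroup α] (A : Matrix m n α) :
    ‖A‖ ^ 2 = ∑ i, ∑ j, ‖A i j‖ ^ 2 := by
  rw [frobenius_norm_def, ← Real.sqrt_eq_rpow, Real.sq_sqrt (by positivity)]
  simp only [Real.rpow_two]

theorem frobenius_norm_sq_eq_re_trace (A : Matrix m n 𝕜) :
    ‖A‖ ^ 2 = RCLike.re (Aᴴ * A).trace := by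
  simp only [frobenius_norm_sq_eq_sum, trace, diag_apply, mul_apply, conjTranspose_apply,
    RCLike.star_def, RCLike.conj_mul, map_sum, ← RCLike.ofReal_pow, RCLike.ofReal_re]
  exact sum_comm

theorem frobenius_norm_unitary_mul [DecidableEq m] {U : Matrix m m 𝕜}
    (hU : U ∈ unitaryGroup m 𝕜) (A : Matrix m n 𝕜) : ‖U * A‖ = ‖A‖ := by
  have hUU : Uᴴ * U = 1 := mem_unitaryGroup_iff'.mp hU
  rw [← sq_eq_sq₀ (norm_nonneg _) (norm_nonneg _), frobenius_norm_sq_eq_re_trace,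
    frobenius_norm_sq_eq_re_trace, conjTranspose_mul, Matrix.mul_assoc, ← Matrix.mul_assoc Uᴴ,
    hUU, Matrix.one_mul]

theorem frobenius_norm_mul_unitary [DecidableEq n] (A : Matrix m n 𝕜) {U : Matrix n n 𝕜}
    (hU : U ∈ unitaryGroup n 𝕜) : ‖A * U‖ = ‖A‖ := by
  rw [← frobenius_norm_conjTranspose, conjTranspose_mul, ← star_eq_conjTranspose,
    frobenius_norm_unitary_mul (Unitary.star_mem hU), frobenius_norm_conjTranspose]

end Frobenius

theorem of_norm_sq_mem_doublyStochastic {𝕜 n : Type*} [RCLike 𝕜] [Fintype n] [DecidableEq n]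
    {U : Matrix n n 𝕜} (hU : U ∈ unitaryGroup n 𝕜) :
    of (fun i j => ‖U i j‖ ^ 2) ∈ doublyStochastic ℝ n := by
  have hrow (i : n) : ∑ j, ‖U i j‖ ^ 2 = 1 := by
    have := congr_fun₂ (mem_unitaryGroup_iff.mp hU) i i
    simp only [mul_apply, star_apply, RCLike.star_def, RCLike.mul_conj, one_apply_eq] at this
    exact_mod_cast this
  have hcol (j : n) : ∑ i, ‖U i j‖ ^ 2 = 1 := by
    have := congr_fun₂ (mem_unitaryGroup_iff'.mp hU) j j
    simp only [mul_apply, star_apply, RCLike.star_def, RCLike.conj_mul, one_apply_eq] at this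
    exact_mod_cast this
  exact mem_doublyStochastic_iff_sum.mpr ⟨fun _ _ => sq_nonneg _, hrow, hcol⟩

namespace Matrix.IsHermitian

variable {𝕜 n : Type*} [RCLike 𝕜] [Fintype n] [DecidableEq n] {A B : Matrix n n 𝕜}

theorem star_eigenvectorUnitary_mul_mul_eigenvectorUnitary (hA : A.IsHermitian) :
    star (hA.eigenvectorUnitary : Matrix n n 𝕜) * A * (hA.eigenvectorUnitary : Matrix n n 𝕜) =
      diagonal (RCLike.ofReal ∘ hA.eigenvalues) := by
  simpa using hA.conjStarAlgAut_star_eigenvectorUnitary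

theorem frobenius_norm_sub_sq (hA : A.IsHermitian) (hB : B.IsHermitian) :
    ‖A - B‖ ^ 2 = ∑ i, ∑ j,
      ‖(star (hA.eigenvectorUnitary : Matrix n n 𝕜) * (hB.eigenvectorUnitary : Matrix n n 𝕜)) i j‖
        ^ 2 * (hA.eigenvalues i - hB.eigenvalues j) ^ 2 := by
  set U : Matrix n n 𝕜 := ↑hA.eigenvectorUnitary
  set V : Matrix n n 𝕜 := ↑hB.eigenvectorUnitary
  have hU : U * star U = 1 := Unitary.mul_star_self_of_mem hA.eigenvectorUnitary.2
  have hV : V * star V = 1 := Unitary.mul_star_self_of_mem hB.eigenvectorUnitary.2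
  have hconj : star U * (A - B) * V =
      diagonal (RCLike.ofReal ∘ hA.eigenvalues) * (star U * V) -
        star U * V * diagonal (RCLike.ofReal ∘ hB.eigenvalues) := by
    rw [← hA.star_eigenvectorUnitary_mul_mul_eigenvectorUnitary,
      ← hB.star_eigenvectorUnitary_mul_mul_eigenvectorUnitary]
    calc star U * (A - B) * V
        = star U * A * (U * star U) * V - star U * (V * star V) * B * V := by
          rw [hU, hV]; noncomm_ring
      _ = _ := by noncomm_ring
  rw [← frobenius_norm_unitary_mul (Unitary.star_mem hA.eigenvectorUnitary.2),
    ← frobenius_norm_mul_unitary _ hB.eigenvectorUnitary.2, hconj, frobenius_norm_sq_eq_sum]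
  refine sum_congr rfl fun i _ => sum_congr rfl fun j _ => ?_
  rw [sub_apply, diagonal_mul, mul_diagonal, Function.comp_apply, Function.comp_apply,
    mul_comm ((star U * V) i j), ← sub_mul, ← RCLike.ofReal_sub, norm_mul, RCLike.norm_ofReal,
    mul_pow, sq_abs, mul_comm]

theorem sum_sub_sq_le_frobenius_norm_sub_sq (hA : A.IsHermitian) (hB : B.IsHermitian)
    {f g : n → ℝ} (hfg : Monovary f g) {σ τ : Equiv.Perm n} (hf : f = hA.eigenvalues ∘ σ)
    (hg : g = hB.eigenvalues ∘ τ) :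
    ∑ i, (f i - g i) ^ 2 ≤ ‖A - B‖ ^ 2 := by
  have hW := mul_mem (Unitary.star_mem hA.eigenvectorUnitary.2) hB.eigenvectorUnitary.2
  rw [hA.frobenius_norm_sub_sq hB]
  refine le_sum_mul_of_mem_doublyStochastic (of_norm_sq_mem_doublyStochastic hW) fun π => ?_
  calc ∑ i, (f i - g i) ^ 2
      ≤ ∑ i, (f i - g ((τ⁻¹ * π * σ) i)) ^ 2 := hfg.sum_sub_sq_le_sum_sub_comp_perm_sq _
    _ = ∑ i, (hA.eigenvalues (σ i) - hB.eigenvalues (π (σ i))) ^ 2 := by simp [hf, hg]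
    _ = ∑ i, (hA.eigenvalues i - hB.eigenvalues (π i)) ^ 2 :=
      Equiv.sum_comp σ fun i => (hA.eigenvalues i - hB.eigenvalues (π i)) ^ 2

end Matrix.IsHermitian

theorem eigenvalue_map_one_lipschitz (n : ℕ)
    (A B : Matrix (Fin n) (Fin n) ℂ) (hA : A.IsHermitian) (hB : B.IsHermitian)
    (μ ν : Fin n → ℝ) (hμmono : Antitone μ) (hνmono : Antitone ν)
    (hμ : ∃ σ : Equiv.Perm (Fin n), μ = hA.eigenvalues ∘ σ)
    (hν : ∃ τ : Equiv.Perm (Fin n), ν = hB.eigenvalues ∘ τ) :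
    Real.sqrt (∑ i, (μ i - ν i) ^ 2) ≤ ‖A - B‖ := by
  obtain ⟨σ, hσ⟩ := hμ
  obtain ⟨τ, hτ⟩ := hν
  exact Real.sqrt_le_iff.mpr ⟨norm_nonneg _,
    hA.sum_sub_sq_le_frobenius_norm_sub_sq hB (hμmono.monovary hνmono) hσ hτ⟩
end

section
/- For d ≥ 2, the function F(A) = tr(A^d) is (d·a^{d−1})-Lipschitz with respect to the Hilbert-Schmidt norm on the open set K_a = { A Hermitian : ‖A‖_{2(d−1)} < a } of n×n Hermitian matrices (for d even; for d odd the same holds for F^±). -/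
open Matrix

attribute [local instance] Matrix.frobeniusNormedAddCommGroup

/-- The set of Hermitian `n × n` matrices with Schatten `2(d-1)`-norm less than `a`;
for Hermitian `A` one has `‖A‖_{2(d-1)}^{2(d-1)} = tr ((AᴴA)^(d-1))`. -/
def schattenBall (n d : ℕ) (a : ℝ) : Set (Matrix (Fin n) (Fin n) ℂ) :=
  {A | A.IsHermitian ∧ (((Aᴴ * A) ^ (d - 1)).trace).re < a ^ (2 * (d - 1))}

open Finset

/-! By the Hoffman–Wielandt inequality, the eigenvalues of Hermitian `A` and `B` can be matched
by a permutation `σ` with `∑ (αᵢ - β_{σ i})² ≤ ‖A - B‖²`: writing `A = U D_α U*`, `B = V D_β V*`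
and `W = U* V`, one has `‖A - B‖² = ∑ |W i j|² (αᵢ - βⱼ)²`, the weights `|W i j|²` form a doubly
stochastic matrix, and by Birkhoff's theorem this linear function of the weights is at least its
value at some permutation matrix.

Each of the three functions is `∑ φ (λᵢ)` with
`|φ s - φ t| ≤ (∑_{k<d} |s|^k |t|^(d-1-k)) |s - t|`. Membership in the Schatten ball says
`∑ λᵢ^(2(d-1)) ≤ a^(2(d-1))`, and Cauchy–Schwarz followed by the weighted AM–GM inequality
`|x|^(2k) |y|^(2(d-1-k)) ≤ (k x^(2(d-1)) + (d-1-k) y^(2(d-1))) / (d-1)` bounds each of the `d`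
terms `∑ᵢ |xᵢ|^k |yᵢ|^(d-1-k) |xᵢ - yᵢ|` by `a^(d-1) ‖x - y‖₂`. -/

lemma abs_pow_sub_pow_le_sum_mul_abs_sub (d : ℕ) (s t : ℝ) :
    |s ^ d - t ^ d| ≤ (∑ k ∈ range d, |s| ^ k * |t| ^ (d - 1 - k)) * |s - t| := by
  rw [← geom_sum₂_mul, abs_mul]
  gcongr
  exact (abs_sum_le_sum_abs _ _).trans_eq (by simp [abs_mul, abs_pow])

lemma abs_max_zero_pow_sub_max_zero_pow_le (d : ℕ) (s t : ℝ) :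
    |max 0 s ^ d - max 0 t ^ d| ≤
      (∑ k ∈ range d, |s| ^ k * |t| ^ (d - 1 - k)) * |s - t| := by
  have abs_max_zero_le (u : ℝ) : |max 0 u| ≤ |u| := by
    rw [abs_of_nonneg (le_max_left 0 u)]
    exact max_le (abs_nonneg u) (le_abs_self u)
  refine (abs_pow_sub_pow_le_sum_mul_abs_sub d _ _).trans ?_
  gcongr (∑ k ∈ range d, ?_ ^ k * ?_ ^ (d - 1 - k)) * ?_
  · exact abs_max_zero_le s
  · exact abs_max_zero_le t
  · rw [max_comm 0 s, max_comm 0 t]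
    exact abs_max_sub_max_le_abs s t 0

lemma mul_pow_mul_pow_sub_le {u v : ℝ} (hu : 0 ≤ u) (hv : 0 ≤ v) {k e : ℕ} (hk : k ≤ e) :
    e * (u ^ k * v ^ (e - k)) ≤ k * u ^ e + (e - k : ℕ) * v ^ e := by
  rcases e.eq_zero_or_pos with rfl | he
  · simp
  have he' : (0 : ℝ) < e := by exact_mod_cast he
  have root_pow {x : ℝ} (hx : 0 ≤ x) (m : ℕ) : (x ^ e) ^ ((m : ℝ) / e) = x ^ m := by
    rw [← Real.rpow_natCast_mul hx, mul_div_cancel₀ _ he'.ne', Real.rpow_natCast]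
  have amgm := Real.geom_mean_le_arith_mean2_weighted (p₁ := u ^ e) (p₂ := v ^ e)
    (w₁ := k / e) (w₂ := (e - k : ℕ) / e) (by positivity) (by positivity) (by positivity)
    (by positivity) (by rw [← add_div, ← Nat.cast_add, Nat.add_sub_cancel' hk, div_self he'.ne'])
  rw [root_pow hu, root_pow hv] at amgm
  calc (e : ℝ) * (u ^ k * v ^ (e - k)) ≤ e * (k / e * u ^ e + (e - k : ℕ) / e * v ^ e) := by
        gcongr
    _ = k * u ^ e + (e - k : ℕ) * v ^ e := by field_simp

lemma sum_pow_mul_pow_sub_le {ι : Type*} (s : Finset ι) {u v : ι → ℝ} (hu : ∀ i ∈ s, 0 ≤ u i)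
    (hv : ∀ i ∈ s, 0 ≤ v i) {k e : ℕ} (hk : k ≤ e) {c : ℝ} (huc : ∑ i ∈ s, u i ^ e ≤ c)
    (hvc : ∑ i ∈ s, v i ^ e ≤ c) :
    ∑ i ∈ s, u i ^ k * v i ^ (e - k) ≤ c := by
  rcases e.eq_zero_or_pos with rfl | he
  · simpa [Nat.le_zero.mp hk] using hvc
  refine le_of_mul_le_mul_left ?_ (by exact_mod_cast he : (0 : ℝ) < e)
  calc (e : ℝ) * ∑ i ∈ s, u i ^ k * v i ^ (e - k)
      ≤ ∑ i ∈ s, (k * u i ^ e + (e - k : ℕ) * v i ^ e) := by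
        rw [mul_sum]
        exact sum_le_sum fun i hi => mul_pow_mul_pow_sub_le (hu i hi) (hv i hi) hk
    _ = k * ∑ i ∈ s, u i ^ e + (e - k : ℕ) * ∑ i ∈ s, v i ^ e := by
        rw [sum_add_distrib, mul_sum, mul_sum]
    _ ≤ k * c + (e - k : ℕ) * c := by gcongr
    _ = e * c := by rw [← add_mul, ← Nat.cast_add, Nat.add_sub_cancel' hk]

lemma sum_abs_pow_mul_abs_pow_mul_abs_sub_le {ι : Type*} (s : Finset ι) {x y : ι → ℝ}
    {k e : ℕ} (hk : k ≤ e) {a : ℝ} (ha : 0 ≤ a) (hx : ∑ i ∈ s, x i ^ (2 * e) ≤ a ^ (2 * e))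
    (hy : ∑ i ∈ s, y i ^ (2 * e) ≤ a ^ (2 * e)) :
    ∑ i ∈ s, |x i| ^ k * |y i| ^ (e - k) * |x i - y i| ≤
      a ^ e * √(∑ i ∈ s, (x i - y i) ^ 2) := by
  have hxy : ∑ i ∈ s, (|x i| ^ k * |y i| ^ (e - k)) ^ 2 ≤ a ^ (2 * e) := by
    have sq_eq (i : ι) :
        (|x i| ^ k * |y i| ^ (e - k)) ^ 2 = (x i ^ 2) ^ k * (y i ^ 2) ^ (e - k) := by
      rw [mul_pow, pow_right_comm, pow_right_comm |y i|, sq_abs, sq_abs]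
    simp only [sq_eq]
    simp only [pow_mul] at hx hy ⊢
    exact sum_pow_mul_pow_sub_le s (fun i _ => sq_nonneg _) (fun i _ => sq_nonneg _) hk hx hy
  calc ∑ i ∈ s, |x i| ^ k * |y i| ^ (e - k) * |x i - y i|
      ≤ √(∑ i ∈ s, (|x i| ^ k * |y i| ^ (e - k)) ^ 2) * √(∑ i ∈ s, |x i - y i| ^ 2) :=
        Real.sum_mul_le_sqrt_mul_sqrt _ _ _
    _ ≤ √(a ^ (2 * e)) * √(∑ i ∈ s, (x i - y i) ^ 2) := by
        simp only [sq_abs]; gcongr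
    _ = a ^ e * √(∑ i ∈ s, (x i - y i) ^ 2) := by
        rw [pow_mul', Real.sqrt_sq (by positivity)]

lemma abs_sum_sub_sum_le_of_abs_sub_le {ι : Type*} (s : Finset ι) {φ : ℝ → ℝ} {d : ℕ}
    (hφ : ∀ u v, |φ u - φ v| ≤ (∑ k ∈ range d, |u| ^ k * |v| ^ (d - 1 - k)) * |u - v|)
    {a : ℝ} (ha : 0 ≤ a) {x y : ι → ℝ} (hx : ∑ i ∈ s, x i ^ (2 * (d - 1)) ≤ a ^ (2 * (d - 1)))
    (hy : ∑ i ∈ s, y i ^ (2 * (d - 1)) ≤ a ^ (2 * (d - 1))) :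
    |∑ i ∈ s, φ (x i) - ∑ i ∈ s, φ (y i)| ≤ d * a ^ (d - 1) * √(∑ i ∈ s, (x i - y i) ^ 2) := by
  calc |∑ i ∈ s, φ (x i) - ∑ i ∈ s, φ (y i)|
      ≤ ∑ i ∈ s, |φ (x i) - φ (y i)| := by
        rw [← sum_sub_distrib]
        exact abs_sum_le_sum_abs _ _
    _ ≤ ∑ i ∈ s, ∑ k ∈ range d, |x i| ^ k * |y i| ^ (d - 1 - k) * |x i - y i| := by
        gcongr with i
        rw [← sum_mul]
        exact hφ _ _
    _ = ∑ k ∈ range d, ∑ i ∈ s, |x i| ^ k * |y i| ^ (d - 1 - k) * |x i - y i| := sum_comm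
    _ ≤ ∑ _k ∈ range d, a ^ (d - 1) * √(∑ i ∈ s, (x i - y i) ^ 2) := by
        refine sum_le_sum fun k hk => ?_
        exact sum_abs_pow_mul_abs_pow_mul_abs_sub_le s (Nat.le_sub_one_of_lt (mem_range.mp hk))
          ha hx hy
    _ = d * a ^ (d - 1) * √(∑ i ∈ s, (x i - y i) ^ 2) := by
        rw [sum_const, card_range, nsmul_eq_mul, mul_assoc]

namespace Matrix

variable {m n 𝕜 : Type*} [Fintype m] [Fintype n] [RCLike 𝕜]

lemma frobenius_norm_sq_eq_sum (M : Matrix m n 𝕜) : ‖M‖ ^ 2 = ∑ i, ∑ j, ‖M i j‖ ^ 2 := by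
  rw [frobenius_norm_def, ← Real.rpow_natCast, ← Real.rpow_mul (by positivity)]
  norm_num

lemma frobenius_norm_sq_eq_re_trace (M : Matrix m n 𝕜) :
    ‖M‖ ^ 2 = RCLike.re (Mᴴ * M).trace := by
  rw [frobenius_norm_sq_eq_sum, sum_comm, trace, map_sum]
  refine sum_congr rfl fun j _ => ?_
  simp only [diag_apply, mul_apply, conjTranspose_apply, map_sum, RCLike.star_def,
    RCLike.conj_mul, ← RCLike.ofReal_pow, RCLike.ofReal_re]

lemma frobenius_norm_unitary_mul [DecidableEq m] {U : Matrix m m 𝕜} (hU : U ∈ unitaryGroup m 𝕜)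
    (M : Matrix m n 𝕜) : ‖U * M‖ = ‖M‖ := by
  have hU' : Uᴴ * U = 1 := hU.1
  rw [← sq_eq_sq₀ (norm_nonneg _) (norm_nonneg _), frobenius_norm_sq_eq_re_trace,
    frobenius_norm_sq_eq_re_trace, conjTranspose_mul, Matrix.mul_assoc, ← Matrix.mul_assoc Uᴴ,
    hU', Matrix.one_mul]

lemma frobenius_norm_mul_unitary [DecidableEq n] {U : Matrix n n 𝕜} (hU : U ∈ unitaryGroup n 𝕜)
    (M : Matrix m n 𝕜) : ‖M * U‖ = ‖M‖ := by
  rw [← frobenius_norm_conjTranspose, conjTranspose_mul, ← star_eq_conjTranspose U,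
    frobenius_norm_unitary_mul (Unitary.star_mem hU), frobenius_norm_conjTranspose]

lemma of_norm_apply_sq_mem_doublyStochastic [DecidableEq n] {U : Matrix n n 𝕜}
    (hU : U ∈ unitaryGroup n 𝕜) : of (fun i j => ‖U i j‖ ^ 2) ∈ doublyStochastic ℝ n := by
  refine mem_doublyStochastic_iff_sum.mpr ⟨fun i j => sq_nonneg _, fun i => ?_, fun j => ?_⟩
  · have h := congr_arg RCLike.re (congr_fun₂ (mem_unitaryGroup_iff.mp hU) i i)
    simp only [mul_apply, star_apply, RCLike.star_def, RCLike.mul_conj, one_apply_eq, map_sum,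
      ← RCLike.ofReal_pow, RCLike.ofReal_re, RCLike.one_re] at h
    exact h
  · have h := congr_arg RCLike.re (congr_fun₂ (mem_unitaryGroup_iff'.mp hU) j j)
    simp only [mul_apply, star_apply, RCLike.star_def, RCLike.conj_mul, one_apply_eq, map_sum,
      ← RCLike.ofReal_pow, RCLike.ofReal_re, RCLike.one_re] at h
    exact h

lemma exists_perm_sum_le_of_mem_doublyStochastic [DecidableEq n] {M : Matrix n n ℝ}
    (hM : M ∈ doublyStochastic ℝ n) (c : Matrix n n ℝ) :
    ∃ σ : Equiv.Perm n, ∑ i, c i (σ i) ≤ ∑ i, ∑ j, M i j * c i j := by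
  rw [← SetLike.mem_coe, doublyStochastic_eq_convexHull_permMatrix] at hM
  let f : Matrix n n ℝ →ₗ[ℝ] ℝ := traceLinearMap n ℝ ℝ ∘ₗ LinearMap.mulRight ℝ cᵀ
  obtain ⟨_, ⟨σ, rfl⟩, hσ⟩ :=
    (f.concaveOn convex_univ).exists_le_of_mem_convexHull (Set.subset_univ _) hM
  refine ⟨σ, ?_⟩
  simpa [f, trace, mul_apply, Equiv.Perm.permMatrix, PEquiv.toMatrix_apply] using hσ

namespace IsHermitian

open Unitary

variable [DecidableEq n] {A B : Matrix n n 𝕜}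

lemma re_trace_pow (hA : A.IsHermitian) (k : ℕ) :
    RCLike.re (A ^ k).trace = ∑ i, hA.eigenvalues i ^ k := by
  conv_lhs => rw [hA.spectral_theorem, ← map_pow, conjStarAlgAut_apply, trace_mul_cycle,
    coe_star_mul_self, Matrix.one_mul, diagonal_pow, trace_diagonal, map_sum]
  simp only [Pi.pow_apply, Function.comp_apply, ← RCLike.ofReal_pow, RCLike.ofReal_re]

theorem exists_perm_sum_sq_eigenvalues_sub_le (hA : A.IsHermitian) (hB : B.IsHermitian) :
    ∃ σ : Equiv.Perm n, ∑ i, (hA.eigenvalues i - hB.eigenvalues (σ i)) ^ 2 ≤ ‖A - B‖ ^ 2 := by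
  set α := hA.eigenvalues
  set β := hB.eigenvalues
  set U := hA.eigenvectorUnitary
  set V := hB.eigenvectorUnitary
  set W : Matrix n n 𝕜 := ↑(star U * V)
  have sub_eq_conj : A - B = (U : Matrix n n 𝕜) *
      (diagonal (RCLike.ofReal ∘ α) * W - W * diagonal (RCLike.ofReal ∘ β)) *
      star (V : Matrix n n 𝕜) := by
    conv_lhs => rw [hA.spectral_theorem, hB.spectral_theorem]
    simp only [W, conjStarAlgAut_apply, Submonoid.coe_mul, coe_star, Matrix.mul_sub,
      Matrix.sub_mul, Matrix.mul_assoc]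
    rw [mul_star_self_of_mem V.2, Matrix.mul_one, ← Matrix.mul_assoc (U : Matrix n n 𝕜) (star _),
      mul_star_self_of_mem U.2, Matrix.one_mul]
  have norm_sub_sq : ‖A - B‖ ^ 2 = ∑ i, ∑ j, ‖W i j‖ ^ 2 * (α i - β j) ^ 2 := by
    rw [sub_eq_conj, frobenius_norm_mul_unitary (star_mem V.2), frobenius_norm_unitary_mul U.2,
      frobenius_norm_sq_eq_sum]
    refine sum_congr rfl fun i _ => sum_congr rfl fun j _ => ?_
    simp only [sub_apply, diagonal_mul, mul_diagonal, Function.comp_apply]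
    rw [mul_comm (RCLike.ofReal _), ← mul_sub, ← RCLike.ofReal_sub, norm_mul, RCLike.norm_ofReal,
      mul_pow, sq_abs, mul_comm]
  obtain ⟨σ, hσ⟩ := exists_perm_sum_le_of_mem_doublyStochastic
    (of_norm_apply_sq_mem_doublyStochastic (star U * V).2) (of fun i j => (α i - β j) ^ 2)
  exact ⟨σ, hσ.trans_eq norm_sub_sq.symm⟩

end IsHermitian

end Matrix

lemma sum_eigenvalues_pow_lt_of_mem_schattenBall {n d : ℕ} {a : ℝ}
    {A : Matrix (Fin n) (Fin n) ℂ} (hA : A ∈ schattenBall n d a) :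
    ∑ i, hA.1.eigenvalues i ^ (2 * (d - 1)) < a ^ (2 * (d - 1)) := by
  have h := hA.2
  rw [hA.1.eq, ← sq, ← pow_mul] at h
  exact (hA.1.re_trace_pow _).symm.trans_lt h

lemma lipschitzOnWith_of_eq_sum_eigenvalues {n d : ℕ} {a : ℝ} (ha : 0 ≤ a) {φ : ℝ → ℝ}
    (hφ : ∀ u v, |φ u - φ v| ≤ (∑ k ∈ range d, |u| ^ k * |v| ^ (d - 1 - k)) * |u - v|)
    {F : Matrix (Fin n) (Fin n) ℂ → ℝ}
    (hF : ∀ A (hA : A ∈ schattenBall n d a), F A = ∑ i, φ (hA.1.eigenvalues i)) :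
    LipschitzOnWith (Real.toNNReal (d * a ^ (d - 1))) F (schattenBall n d a) := by
  refine LipschitzOnWith.of_dist_le_mul fun A hA B hB => ?_
  obtain ⟨σ, hσ⟩ := hA.1.exists_perm_sum_sq_eigenvalues_sub_le hB.1
  have hBσ : ∑ i, hB.1.eigenvalues (σ i) ^ (2 * (d - 1)) ≤ a ^ (2 * (d - 1)) := by
    rw [Equiv.sum_comp σ (fun i => hB.1.eigenvalues i ^ _)]
    exact (sum_eigenvalues_pow_lt_of_mem_schattenBall hB).le
  rw [Real.coe_toNNReal _ (by positivity), Real.dist_eq, hF A hA, hF B hB,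
    ← Equiv.sum_comp σ (fun i => φ (hB.1.eigenvalues i)), dist_eq_norm,
    ← Real.sqrt_sq (norm_nonneg (A - B))]
  refine (abs_sum_sub_sum_le_of_abs_sub_le univ hφ ha
    (sum_eigenvalues_pow_lt_of_mem_schattenBall hA).le hBσ).trans ?_
  exact mul_le_mul_of_nonneg_left (Real.sqrt_le_sqrt hσ) (by positivity)

theorem trace_pow_locally_lipschitz_general (n d : ℕ) (a : ℝ) (ha : 0 < a) :
    (Even d →
      LipschitzOnWith (Real.toNNReal (d * a ^ (d - 1)))
        (fun A : Matrix (Fin n) (Fin n) ℂ => ((A ^ d).trace).re)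
        (schattenBall n d a)) ∧
    (Odd d →
      LipschitzOnWith (Real.toNNReal (d * a ^ (d - 1)))
        (fun A : Matrix (Fin n) (Fin n) ℂ =>
          if h : A.IsHermitian then ∑ i, (max 0 (h.eigenvalues i)) ^ d else 0)
        (schattenBall n d a) ∧
      LipschitzOnWith (Real.toNNReal (d * a ^ (d - 1)))
        (fun A : Matrix (Fin n) (Fin n) ℂ =>
          if h : A.IsHermitian then ∑ i, (max 0 (-(h.eigenvalues i))) ^ d else 0)
        (schattenBall n d a)) := by
  have abs_max_zero_neg_pow_sub_le (u v : ℝ) :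
      |max 0 (-u) ^ d - max 0 (-v) ^ d| ≤
        (∑ k ∈ range d, |u| ^ k * |v| ^ (d - 1 - k)) * |u - v| := by
    simpa only [abs_neg, neg_sub_neg, abs_sub_comm v u] using
      abs_max_zero_pow_sub_max_zero_pow_le d (-u) (-v)
  refine ⟨fun _ => ?_, fun _ => ⟨?_, ?_⟩⟩
  · exact lipschitzOnWith_of_eq_sum_eigenvalues ha.le (abs_pow_sub_pow_le_sum_mul_abs_sub d)
      fun A hA => hA.1.re_trace_pow d
  · exact lipschitzOnWith_of_eq_sum_eigenvalues ha.le (abs_max_zero_pow_sub_max_zero_pow_le d)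
      fun A hA => dif_pos hA.1
  · exact lipschitzOnWith_of_eq_sum_eigenvalues ha.le abs_max_zero_neg_pow_sub_le
      fun A hA => dif_pos hA.1

theorem trace_pow_locally_lipschitz (n d : ℕ) (hd : 2 ≤ d) (a : ℝ) (ha : 0 < a) :
    (Even d →
      LipschitzOnWith (Real.toNNReal (d * a ^ (d - 1)))
        (fun A : Matrix (Fin n) (Fin n) ℂ => ((A ^ d).trace).re)
        (schattenBall n d a)) ∧
    (Odd d →
      LipschitzOnWith (Real.toNNReal (d * a ^ (d - 1)))
        (fun A : Matrix (Fin n) (Fin n) ℂ =>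
          if h : A.IsHermitian then ∑ i, (max 0 (h.eigenvalues i)) ^ d else 0)
        (schattenBall n d a) ∧
      LipschitzOnWith (Real.toNNReal (d * a ^ (d - 1)))
        (fun A : Matrix (Fin n) (Fin n) ℂ =>
          if h : A.IsHermitian then ∑ i, (max 0 (-(h.eigenvalues i))) ^ d else 0)
        (schattenBall n d a)) :=
  trace_pow_locally_lipschitz_general n d a ha
end
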